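/- Let A be an N×N real matrix with nonnegative entries. Then A is line-sum-symmetric (A𝟙 = Aᵀ𝟙) if and only if for every vector u ∈ (0,+∞)^N one has Σ_{i,j=1}^N a_{ij} u_j / u_i ≥ Σ_{i,j=1}^N a_{ij}. Furthermore, if A is in addition irreducible and line-sum-symmetric, then equality holds for a given positive vector u if and only if u is a scalar multiple of 𝟙. -/
import Mathlib


open Matrix

/-- Irreducibility of a matrix: there is no nonempty proper subset `S` of indices with
`A i j = 0` for all `i ∈ S`, `j ∉ S`. -/
def MatrixIrreducible {N : ℕ} (A : Matrix (Fin N) (Fin N) ℝ) : Prop :=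
  ∀ S : Finset (Fin N), S.Nonempty → S ≠ Finset.univ → ∃ i ∈ S, ∃ j ∉ S, A i j ≠ 0

lemma stmt3_term_le {a x y : ℝ} (ha : 0 ≤ a) (hx : 0 < x) (hy : 0 < y) :
    a + a * (Real.log y - Real.log x) ≤ a * y / x := by
  have h1 : Real.log (y / x) ≤ y / x - 1 := Real.log_le_sub_one_of_pos (by positivity)
  rw [Real.log_div hy.ne' hx.ne'] at h1
  rw [mul_div_assoc]
  nlinarith [mul_le_mul_of_nonneg_left h1 ha]

lemma stmt3_term_eq {a x y : ℝ} (ha : 0 ≤ a) (hx : 0 < x) (hy : 0 < y)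
    (hane : a ≠ 0)
    (h : a + a * (Real.log y - Real.log x) = a * y / x) : y = x := by
  by_contra hyx
  have hpos : 0 < a := lt_of_le_of_ne ha (Ne.symm hane)
  have hyx' : y / x ≠ 1 := by
    intro he
    exact hyx (by field_simp at he; exact he)
  have h1 : Real.log (y / x) < y / x - 1 :=
    Real.log_lt_sub_one_of_pos (by positivity) hyx'
  rw [Real.log_div hy.ne' hx.ne'] at h1
  rw [mul_div_assoc] at h
  nlinarith

lemma stmt3_logsum {N : ℕ} (A : Matrix (Fin N) (Fin N) ℝ)
    (h : ∀ i, ∑ j, A i j = ∑ j, A j i) (f : Fin N → ℝ) :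
    ∑ i, ∑ j, A i j * (f j - f i) = 0 := by
  have h1 : ∑ i, ∑ j, A i j * f j = ∑ i, ∑ j, A i j * f i := by
    rw [Finset.sum_comm]
    refine Finset.sum_congr rfl fun j _ => ?_
    simp only [← Finset.sum_mul]
    rw [← h j]
  simp only [mul_sub, Finset.sum_sub_distrib, h1, sub_self]

lemma stmt3_key_neg {R C : ℝ} (hR : 0 ≤ R) (hC : 0 ≤ C) (hne : R ≠ C) :
    (1/((R+C+1)/(2*C+1)) - 1) * R + ((R+C+1)/(2*C+1) - 1) * C < 0 := by
  have hd : (0:ℝ) < 2*C+1 := by linarith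
  have h0 : R - C ≠ 0 := sub_ne_zero.mpr hne
  have h2 : 0 < (R-C)^2 := lt_of_le_of_ne (sq_nonneg _) (Ne.symm (pow_ne_zero 2 h0))
  have hn : (0:ℝ) < R+C+1 := by linarith
  rw [one_div_div]
  have e1 : (2*C+1)/(R+C+1) - 1 = (C - R)/(R+C+1) := by field_simp; ring
  have e2 : (R+C+1)/(2*C+1) - 1 = (R - C)/(2*C+1) := by field_simp; ring
  rw [e1, e2, div_mul_eq_mul_div, div_mul_eq_mul_div,
    div_add_div _ _ (ne_of_gt hn) (ne_of_gt hd)]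
  apply div_neg_of_neg_of_pos _ (by positivity)
  nlinarith

lemma stmt3_base {N : ℕ} (A : Matrix (Fin N) (Fin N) ℝ)
    (h : ∀ i, ∑ j, A i j = ∑ j, A j i) (u : Fin N → ℝ) :
    ∑ i, ∑ j, (A i j + A i j * (Real.log (u j) - Real.log (u i))) = ∑ i, ∑ j, A i j := by
  have hz : ∑ i, ∑ j, A i j * (Real.log (u j) - Real.log (u i)) = 0 :=
    stmt3_logsum A h (fun i => Real.log (u i))
  simp only [Finset.sum_add_distrib]
  rw [hz, add_zero]

lemma stmt3_ge {N : ℕ} (A : Matrix (Fin N) (Fin N) ℝ) (hA_nonneg : ∀ i j, 0 ≤ A i j)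
    (h : ∀ i, ∑ j, A i j = ∑ j, A j i) (u : Fin N → ℝ) (hu : ∀ i, 0 < u i) :
    ∑ i, ∑ j, A i j * u j / u i ≥ ∑ i, ∑ j, A i j := by
  rw [← stmt3_base A h u]
  exact Finset.sum_le_sum fun i _ => Finset.sum_le_sum fun j _ =>
    stmt3_term_le (hA_nonneg i j) (hu i) (hu j)

theorem stmt3 {N : ℕ} (hN : 1 ≤ N)
    (A : Matrix (Fin N) (Fin N) ℝ) (hA_nonneg : ∀ i j, 0 ≤ A i j) :
    -- A is line-sum-symmetric iff the inequality holds for every positive vector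
    ((∀ i, ∑ j, A i j = ∑ j, A j i) ↔
      ∀ u : Fin N → ℝ, (∀ i, 0 < u i) →
        ∑ i, ∑ j, A i j * u j / u i ≥ ∑ i, ∑ j, A i j)
    ∧
    -- furthermore, in the irreducible line-sum-symmetric case, equality holds
    -- exactly for the scalar multiples of 𝟙
    ((∀ i, ∑ j, A i j = ∑ j, A j i) → MatrixIrreducible A →
      ∀ u : Fin N → ℝ, (∀ i, 0 < u i) →
        (∑ i, ∑ j, A i j * u j / u i = ∑ i, ∑ j, A i j ↔
          ∃ t : ℝ, ∀ i, u i = t)) := by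
  constructor
  · constructor
    · exact fun h u hu => stmt3_ge A hA_nonneg h u hu
    · -- converse: inequality for all positive u implies line-sum symmetry
      intro hviol
      by_contra hns
      push_neg at hns
      obtain ⟨k, hk⟩ := hns
      set R := ∑ j ∈ Finset.univ.erase k, A k j with hRdef
      set C := ∑ i ∈ Finset.univ.erase k, A i k with hCdef
      have hRf : ∑ j, A k j = A k k + R :=
        (Finset.add_sum_erase _ (fun j => A k j) (Finset.mem_univ k)).symm
      have hCf : ∑ i, A i k = A k k + C :=
        (Finset.add_sum_erase _ (fun i => A i k) (Finset.mem_univ k)).symm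
      have hR0 : 0 ≤ R := Finset.sum_nonneg fun j _ => hA_nonneg k j
      have hC0 : 0 ≤ C := Finset.sum_nonneg fun i _ => hA_nonneg i k
      have hRC : R ≠ C := by
        intro he
        exact hk (by rw [hRf, hCf, he])
      set x := (R + C + 1) / (2 * C + 1) with hxdef
      have hx : 0 < x := div_pos (by linarith) (by linarith)
      set v : Fin N → ℝ := fun i => if i = k then x else 1 with hvdef
      have hv : ∀ i, 0 < v i := by
        intro i
        simp only [hvdef]
        split
        · exact hx
        · norm_num
      have hrow : ∀ i, ∑ j, A i j * v j = (∑ j, A i j) + A i k * (x - 1) := by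
        intro i
        have he : ∀ j, A i j * v j = A i j + (if j = k then A i j * (x - 1) else 0) := by
          intro j
          simp only [hvdef]
          split <;> ring
        simp only [he, Finset.sum_add_distrib, Fintype.sum_ite_eq']
      have hL : ∑ i, ∑ j, A i j * v j / v i
          = ∑ i, ((∑ j, A i j) + A i k * (x - 1)) / v i := by
        refine Finset.sum_congr rfl fun i _ => ?_
        rw [← Finset.sum_div, hrow i]
      have hsplit : ∀ i, ((∑ j, A i j) + A i k * (x - 1)) / v i
          = ((∑ j, A i j) + A i k * (x - 1))
            + (if i = k then ((∑ j, A k j) + A k k * (x - 1)) / x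
                - ((∑ j, A k j) + A k k * (x - 1)) else 0) := by
        intro i
        simp only [hvdef]
        split
        · next hik => subst hik; ring
        · simp
      have hL2 : ∑ i, ∑ j, A i j * v j / v i
          = (∑ i, ∑ j, A i j) + (∑ i, A i k) * (x - 1)
            + (((∑ j, A k j) + A k k * (x - 1)) / x
                - ((∑ j, A k j) + A k k * (x - 1))) := by
        rw [hL]
        simp only [hsplit, Finset.sum_add_distrib, Fintype.sum_ite_eq', ← Finset.sum_mul]
      have hspec := hviol v hv
      rw [hL2] at hspec
      have hkey := stmt3_key_neg hR0 hC0 hRC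
      have halg : (∑ i, A i k) * (x - 1)
            + (((∑ j, A k j) + A k k * (x - 1)) / x
                - ((∑ j, A k j) + A k k * (x - 1)))
          = (1/x - 1) * R + (x - 1) * C := by
        rw [hRf, hCf]
        field_simp
        ring
      rw [← hxdef] at hkey
      linarith
  · -- equality case
    intro h hirr u hu
    have k0 : Fin N := ⟨0, hN⟩
    constructor
    · intro hEq
      have key : ∀ i j, A i j ≠ 0 → u j = u i := by
        have hprod : ∑ p : Fin N × Fin N,
            (A p.1 p.2 + A p.1 p.2 * (Real.log (u p.2) - Real.log (u p.1)))
            = ∑ p : Fin N × Fin N, A p.1 p.2 * u p.2 / u p.1 := by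
          rw [Fintype.sum_prod_type, Fintype.sum_prod_type, stmt3_base A h u, hEq]
        have hle : ∀ p ∈ (Finset.univ : Finset (Fin N × Fin N)),
            A p.1 p.2 + A p.1 p.2 * (Real.log (u p.2) - Real.log (u p.1))
              ≤ A p.1 p.2 * u p.2 / u p.1 :=
          fun p _ => stmt3_term_le (hA_nonneg p.1 p.2) (hu p.1) (hu p.2)
        have hall := (Finset.sum_eq_sum_iff_of_le hle).mp hprod
        intro i j hij
        exact stmt3_term_eq (hA_nonneg i j) (hu i) (hu j) hij
          (hall (i, j) (Finset.mem_univ _))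
      set S : Finset (Fin N) := Finset.univ.filter (fun i => u i = u k0) with hSdef
      have hS : S = Finset.univ := by
        by_contra hSne
        obtain ⟨i, hiS, j, hjS, hij⟩ := hirr S ⟨k0, by simp [hSdef]⟩ hSne
        apply hjS
        simp only [hSdef, Finset.mem_filter, Finset.mem_univ, true_and] at hiS ⊢
        rw [key i j hij, hiS]
      refine ⟨u k0, fun i => ?_⟩
      have := hS ▸ Finset.mem_univ i
      simpa [hSdef] using (Finset.mem_filter.mp this).2
    · rintro ⟨t, ht⟩
      have ht0 : 0 < t := ht k0 ▸ hu k0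
      refine Finset.sum_congr rfl fun i _ => Finset.sum_congr rfl fun j _ => ?_
      rw [ht i, ht j, mul_div_assoc, div_self ht0.ne', mul_one]
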